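/- Two signed graphs with the same underlying graph are switching equivalent if and only if they have the same set of positive cycles. -/

import Mathlib

structure SignedGraph (V : Type*) where
  G : SimpleGraph V
  sign : V → V → ℤ
  sign_symm : ∀ u v, sign u v = sign v u
  sign_mem : ∀ u v, G.Adj u v → sign u v = 1 ∨ sign u v = -1
  sign_not : ∀ u v, ¬ G.Adj u v → sign u v = 0

namespace SignedGraph

variable {V : Type*}

/-- The adjacency matrix of a signed graph, over `ℝ`. -/
noncomputable def adjMatrix (Γ : SignedGraph V) : Matrix V V ℝ :=
  fun u v => (Γ.sign u v : ℝ)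

/-- The largest eigenvalue `λ₁` of a signed graph. -/
noncomputable def lambda1 (Γ : SignedGraph V) [Fintype V] : ℝ :=
  letI := Classical.decEq V
  sSup (spectrum ℝ Γ.adjMatrix)

/-- The smallest eigenvalue `λₙ` of a signed graph. -/
noncomputable def lambdaMin (Γ : SignedGraph V) [Fintype V] : ℝ :=
  letI := Classical.decEq V
  sInf (spectrum ℝ Γ.adjMatrix)

/-- The spectral radius `ρ = max {λ₁, -λₙ}` of a signed graph. -/
noncomputable def rho (Γ : SignedGraph V) [Fintype V] : ℝ :=
  max Γ.lambda1 (-Γ.lambdaMin)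

/-- The sign (product of edge signs) of a walk. -/
def walkSign (Γ : SignedGraph V) {G' : SimpleGraph V} : ∀ {u v : V}, G'.Walk u v → ℤ
  | _, _, .nil => 1
  | _, _, .cons (u := a) (v := b) _ p => Γ.sign a b * walkSign Γ p

/-- A signed graph is balanced if every cycle is positive. -/
def Balanced (Γ : SignedGraph V) : Prop :=
  ∀ (u : V) (w : Γ.G.Walk u u), w.IsCycle → Γ.walkSign w = 1

def Unbalanced (Γ : SignedGraph V) : Prop := ¬ Γ.Balanced

/-- `Γ` has a negative cycle of length `k`. -/
def HasNegCycleOfLength (Γ : SignedGraph V) (k : ℕ) : Prop :=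
  ∃ (u : V) (w : Γ.G.Walk u u), w.IsCycle ∧ Γ.walkSign w = -1 ∧ w.length = k

/-- Switching equivalence: same underlying graph and signs related by a switching function. -/
def SwitchingEquivalent (Γ Γ' : SignedGraph V) : Prop :=
  Γ.G = Γ'.G ∧ ∃ s : V → ℤ, (∀ v, s v = 1 ∨ s v = -1) ∧
    ∀ u v, Γ'.sign u v = s u * Γ.sign u v * s v

/-- Switching isomorphism. -/
def SwitchingIsomorphic {V' : Type*} (Γ : SignedGraph V) (Γ' : SignedGraph V') : Prop :=
  ∃ (e : V ≃ V') (s : V → ℤ), (∀ v, s v = 1 ∨ s v = -1) ∧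
    (∀ u v, Γ'.G.Adj (e u) (e v) ↔ Γ.G.Adj u v) ∧
    (∀ u v, Γ'.sign (e u) (e v) = s u * Γ.sign u v * s v)

/-- Build a signed graph from a symmetric sign function with values in `{0, 1, -1}`. -/
def ofSign (s : V → V → ℤ) (hsymm : ∀ u v, s u v = s v u)
    (hloop : ∀ v, s v v = 0)
    (hval : ∀ u v, s u v = 0 ∨ s u v = 1 ∨ s u v = -1) : SignedGraph V where
  G := { Adj := fun u v => s u v ≠ 0
         symm := ⟨fun u v h => by
           show s v u ≠ 0
           rw [hsymm v u]; exact h⟩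
         loopless := ⟨fun v h => h (hloop v)⟩ }
  sign := s
  sign_symm := hsymm
  sign_mem := fun u v h => (hval u v).resolve_left h
  sign_not := fun u v h => not_not.mp h

/-- Build a signed graph on `Fin n` from a sign function on ordered pairs of naturals. -/
def ofMinMaxAux (n : ℕ) (aux : ℕ → ℕ → ℤ) (h0 : ∀ a, aux a a = 0)
    (hval : ∀ a b, aux a b = 0 ∨ aux a b = 1 ∨ aux a b = -1) : SignedGraph (Fin n) :=
  ofSign (fun i j => aux (min i.val j.val) (max i.val j.val))
    (fun i j => by
      show aux (min i.val j.val) (max i.val j.val) = aux (min j.val i.val) (max j.val i.val)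
      rw [min_comm, max_comm])
    (fun i => by
      show aux (min i.val i.val) (max i.val i.val) = 0
      rw [min_self, max_self, h0])
    (fun i j => hval _ _)

def gammaNAux : ℕ → ℕ → ℤ := fun a b =>
  if a = b then 0
  else if a = 0 ∧ b = 1 then -1
  else if a = 0 ∧ b = 2 then 1
  else if a = 1 ∧ b = 3 then 1
  else if 2 ≤ a ∧ a < b ∧ ¬(a = 2 ∧ b = 3) then 1
  else 0

/-- The signed graph `Γₙ`: a copy of `K_{n-2}` (on `{2, …, n-1}`) with the edge `{2,3}`
removed, together with two new vertices `0, 1` and edges `{0,1}` (negative),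
`{0,2}` and `{1,3}` (positive); all other edges positive. -/
def GammaN (n : ℕ) : SignedGraph (Fin n) :=
  ofMinMaxAux n gammaNAux (fun a => by simp [gammaNAux])
    (fun a b => by unfold gammaNAux; split_ifs <;> simp)

def gammaNTauAux (τ : ℕ) : ℕ → ℕ → ℤ := fun a b =>
  if a = b then 0
  else if a = 0 ∧ b = 1 then -1
  else if a = 0 ∧ b = 3 then 1
  else if a = 0 ∧ 4 ≤ b ∧ b ≤ τ + 3 then 1
  else if a = 1 ∧ b = 2 then 1
  else if a = 2 ∧ τ + 4 ≤ b then 1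
  else if a = 3 ∧ 4 ≤ b then 1
  else if 4 ≤ a ∧ a < b then 1
  else 0

/-- The signed graph `Γ_{n,τ}`: here `v₁ = 0`, `v₂ = 1`, `v₃ = 2`, `v₅ = 3`,
`X = {4, …, τ+3}`, `Y = {τ+4, …, n-1}` (with `v₄ = τ+4 ∈ Y`); the edge `{0,1}` is the
unique negative edge. -/
def GammaNTau (n τ : ℕ) : SignedGraph (Fin n) :=
  ofMinMaxAux n (gammaNTauAux τ) (fun a => by simp [gammaNTauAux])
    (fun a b => by unfold gammaNTauAux; split_ifs <;> simp)

/-- The negation `-Γ` of a signed graph. -/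
def neg (Γ : SignedGraph V) : SignedGraph V where
  G := Γ.G
  sign := fun u v => - Γ.sign u v
  sign_symm := fun u v => by
    show -Γ.sign u v = -Γ.sign v u
    rw [Γ.sign_symm]
  sign_mem := fun u v h => by
    show -Γ.sign u v = 1 ∨ -Γ.sign u v = -1
    rcases Γ.sign_mem u v h with h' | h' <;> simp [h']
  sign_not := fun u v h => by
    show -Γ.sign u v = 0
    simp [Γ.sign_not u v h]

/-- The induced signed subgraph on a set of vertices. -/
def induce (Γ : SignedGraph V) (S : Set V) : SignedGraph S where
  G := { Adj := fun u v => Γ.G.Adj u v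
         symm := ⟨fun u v h => Γ.G.symm.symm u v h⟩
         loopless := ⟨fun u h => Γ.G.loopless.irrefl u h⟩ }
  sign := fun u v => Γ.sign u v
  sign_symm := fun u v => Γ.sign_symm u v
  sign_mem := fun u v h => Γ.sign_mem u v h
  sign_not := fun u v h => Γ.sign_not u v h

/-- `S` is a balanced clique of `Γ`: it induces a complete subgraph which is balanced. -/
def IsBalancedClique [DecidableEq V] (Γ : SignedGraph V) (S : Finset V) : Prop :=
  (∀ u ∈ S, ∀ v ∈ S, u ≠ v → Γ.G.Adj u v) ∧ (Γ.induce (S : Set V)).Balanced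

end SignedGraph

/-!
Along a walk, a switching `s` multiplies each edge sign by `s a * s b`; the inner factors
cancel, so the sign of a walk from `u` to `v` changes by `s u * s v`, and the sign of a
closed walk does not change. Conversely, if `Γ` and `Γ'` have the same positive cycles, the
signed graph with signs `Γ.sign * Γ'.sign` is balanced. In a balanced signed graph every
closed walk is positive (shortcutting a walk to a path only removes positive cycles and
back-and-forth steps), so the sign of a walk depends only on its endpoints, and the sign of
a walk from a fixed root of each component is a switching that makes every edge positive.
-/

namespace SignedGraph

open SimpleGraph

variable {V : Type*} {Γ Γ' : SignedGraph V} {G' : SimpleGraph V}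

theorem isUnit_sign (Γ : SignedGraph V) {u v : V} (h : Γ.G.Adj u v) : IsUnit (Γ.sign u v) :=
  Int.isUnit_iff.mpr (Γ.sign_mem u v h)

@[simp]
theorem walkSign_nil (Γ : SignedGraph V) {u : V} : Γ.walkSign (Walk.nil : G'.Walk u u) = 1 :=
  rfl

@[simp]
theorem walkSign_cons (Γ : SignedGraph V) {u v w : V} (h : G'.Adj u v) (p : G'.Walk v w) :
    Γ.walkSign (Walk.cons h p) = Γ.sign u v * Γ.walkSign p :=
  rfl

@[simp]
theorem walkSign_append (Γ : SignedGraph V) {u v w : V} (p : G'.Walk u v) (q : G'.Walk v w) :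
    Γ.walkSign (p.append q) = Γ.walkSign p * Γ.walkSign q := by
  induction p with
  | nil => simp
  | cons h p ih => simp [ih, mul_assoc]

@[simp]
theorem walkSign_concat (Γ : SignedGraph V) {u v w : V} (p : G'.Walk u v) (h : G'.Adj v w) :
    Γ.walkSign (p.concat h) = Γ.walkSign p * Γ.sign v w := by
  simp [Walk.concat_eq_append]

@[simp]
theorem walkSign_reverse (Γ : SignedGraph V) {u v : V} (p : G'.Walk u v) :
    Γ.walkSign p.reverse = Γ.walkSign p := by
  induction p with
  | nil => rfl
  | cons h p ih => simp [ih, Γ.sign_symm, mul_comm]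

theorem isUnit_walkSign (Γ : SignedGraph V) (hG' : G' ≤ Γ.G) {u v : V} (p : G'.Walk u v) :
    IsUnit (Γ.walkSign p) := by
  induction p with
  | nil => exact isUnit_one
  | cons h p ih => exact (Γ.isUnit_sign (hG' h)).mul ih

theorem walkSign_of_switching (s : V → ℤ) (hs : ∀ v, s v * s v = 1)
    (hσ : ∀ u v, Γ'.sign u v = s u * Γ.sign u v * s v) {u v : V} (p : G'.Walk u v) :
    Γ'.walkSign p = s u * Γ.walkSign p * s v := by
  induction p with
  | nil => simp [hs]
  | @cons a b c h p ih =>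
    rw [walkSign_cons, walkSign_cons, hσ, ih]
    linear_combination (s a * Γ.sign a b * Γ.walkSign p * s c) * hs b

def mul (Γ Γ' : SignedGraph V) (hG : Γ.G = Γ'.G) : SignedGraph V where
  G := Γ.G
  sign u v := Γ.sign u v * Γ'.sign u v
  sign_symm u v := by rw [Γ.sign_symm, Γ'.sign_symm]
  sign_mem u v h := Int.isUnit_iff.mp ((Γ.isUnit_sign h).mul (Γ'.isUnit_sign (hG ▸ h)))
  sign_not u v h := by simp [Γ.sign_not u v h]

@[simp]
theorem walkSign_mul (hG : Γ.G = Γ'.G) {u v : V} (p : G'.Walk u v) :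
    (Γ.mul Γ' hG).walkSign p = Γ.walkSign p * Γ'.walkSign p := by
  induction p with
  | nil => rfl
  | cons h p ih =>
    simp only [walkSign_cons, ih]
    exact mul_mul_mul_comm _ _ _ _

theorem balanced_mul (hG : Γ.G = Γ'.G)
    (h : ∀ (u : V) (w : Γ.G.Walk u u), w.IsCycle → (Γ.walkSign w = 1 ↔ Γ'.walkSign w = 1)) :
    (Γ.mul Γ' hG).Balanced := by
  intro u (w : Γ.G.Walk u u) hw
  have hw' := h u w hw
  refine (walkSign_mul hG w).trans ?_
  rcases Int.isUnit_iff.mp (Γ.isUnit_walkSign le_rfl w) with h₁ | h₁ <;>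
    rcases Int.isUnit_iff.mp (Γ'.isUnit_walkSign hG.le w) with h₂ | h₂ <;>
    simp [h₁, h₂] at hw' ⊢

noncomputable def rootWalk (G : SimpleGraph V) (v : V) :
    G.Walk (G.connectedComponentMk v).out v :=
  (ConnectedComponent.exact (G.connectedComponentMk v).out_eq).some

noncomputable def potential (Γ : SignedGraph V) (v : V) : ℤ :=
  Γ.walkSign (rootWalk Γ.G v)

theorem isUnit_potential (Γ : SignedGraph V) (v : V) : IsUnit (Γ.potential v) :=
  Γ.isUnit_walkSign le_rfl _

namespace Balanced

theorem walkSign_cons_of_isPath (hΓ : Γ.Balanced) {u v : V} (h : Γ.G.Adj u v)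
    {q : Γ.G.Walk v u} (hq : q.IsPath) : Γ.walkSign (Walk.cons h q) = 1 := by
  by_cases he : s(u, v) ∈ q.edges
  · rw [hq.eq_adj_toWalk_of_mem_edges (Sym2.eq_swap ▸ he)]
    simpa [Γ.sign_symm v u] using Int.isUnit_mul_self (Γ.isUnit_sign h)
  · exact hΓ u _ ((Walk.cons_isCycle_iff q h).mpr ⟨hq, he⟩)

theorem walkSign_bypass [DecidableEq V] (hΓ : Γ.Balanced) {u v : V} (p : Γ.G.Walk u v) :
    Γ.walkSign p.bypass = Γ.walkSign p := by
  induction p with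
  | nil => rfl
  | @cons u x v h p ih =>
    rw [Walk.bypass]
    split_ifs with hu
    · have hloop := hΓ.walkSign_cons_of_isPath h (p.bypass_isPath.takeUntil hu)
      have hsplit := congrArg Γ.walkSign (p.bypass.take_spec hu)
      rw [walkSign_append] at hsplit
      rw [walkSign_cons, ← ih, ← hsplit, ← mul_assoc, ← walkSign_cons Γ h, hloop, one_mul]
    · rw [walkSign_cons, walkSign_cons, ih]

theorem walkSign_eq_one (hΓ : Γ.Balanced) {u : V} (p : Γ.G.Walk u u) : Γ.walkSign p = 1 := by
  classical
  rw [← hΓ.walkSign_bypass, (Walk.isPath_iff_nil.mp p.bypass_isPath).eq_nil, walkSign_nil]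

theorem walkSign_eq (hΓ : Γ.Balanced) {u v : V} (p q : Γ.G.Walk u v) :
    Γ.walkSign p = Γ.walkSign q := by
  have hpq := hΓ.walkSign_eq_one (p.append q.reverse)
  rw [walkSign_append, walkSign_reverse] at hpq
  calc Γ.walkSign p = Γ.walkSign p * (Γ.walkSign q * Γ.walkSign q) := by
        rw [Int.isUnit_mul_self (Γ.isUnit_walkSign le_rfl q), mul_one]
    _ = Γ.walkSign q := by rw [← mul_assoc, hpq, one_mul]

theorem potential_eq (hΓ : Γ.Balanced) {c : Γ.G.ConnectedComponent} {v : V}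
    (hv : Γ.G.connectedComponentMk v = c) (p : Γ.G.Walk c.out v) :
    Γ.potential v = Γ.walkSign p := by
  subst hv
  exact hΓ.walkSign_eq _ p

theorem sign_eq_potential_mul (hΓ : Γ.Balanced) {u v : V} (h : Γ.G.Adj u v) :
    Γ.sign u v = Γ.potential u * Γ.potential v := by
  have hv : Γ.potential v = Γ.potential u * Γ.sign u v :=
    (hΓ.potential_eq (ConnectedComponent.sound h.symm.reachable) ((rootWalk Γ.G u).concat h)).trans
      (walkSign_concat _ _ _)
  rw [hv, ← mul_assoc, Int.isUnit_mul_self (Γ.isUnit_potential u), one_mul]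

/-- Harary's balance theorem. -/
theorem exists_switching (hΓ : Γ.Balanced) :
    ∃ s : V → ℤ, (∀ v, s v = 1 ∨ s v = -1) ∧ ∀ u v, Γ.G.Adj u v → Γ.sign u v = s u * s v :=
  ⟨Γ.potential, fun v => Int.isUnit_iff.mp (Γ.isUnit_potential v),
    fun _ _ h => hΓ.sign_eq_potential_mul h⟩

end Balanced

end SignedGraph

open SignedGraph in
theorem switching_equivalent_iff_same_positive_cycles_general {V : Type*}
    (Γ Γ' : SignedGraph V) (hG : Γ.G = Γ'.G) :
    Γ.SwitchingEquivalent Γ' ↔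
      ∀ (u : V) (w : Γ.G.Walk u u), w.IsCycle →
        (Γ.walkSign w = 1 ↔ Γ'.walkSign w = 1) := by
  constructor
  · rintro ⟨-, s, hs, hσ⟩ u w -
    have hs' : ∀ v, s v * s v = 1 := fun v => Int.isUnit_mul_self (Int.isUnit_iff.mpr (hs v))
    rw [walkSign_of_switching s hs' hσ w, mul_right_comm, hs', one_mul]
  · intro hsame
    obtain ⟨s, hs, hΔ⟩ := (balanced_mul hG hsame).exists_switching
    refine ⟨hG, s, hs, fun u v => ?_⟩
    by_cases h : Γ.G.Adj u v
    · have hΔuv : Γ.sign u v * Γ'.sign u v = s u * s v := hΔ u v h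
      have hsq := Int.isUnit_mul_self (Γ.isUnit_sign h)
      linear_combination Γ.sign u v * hΔuv - Γ'.sign u v * hsq
    · rw [Γ.sign_not u v h, Γ'.sign_not u v (hG ▸ h), mul_zero, zero_mul]

open SignedGraph in
/-- Two signed graphs with the same underlying graph are switching equivalent
if and only if they have the same set of positive cycles. -/
theorem switching_equivalent_iff_same_positive_cycles {V : Type*} [Fintype V]
    (Γ Γ' : SignedGraph V) (hG : Γ.G = Γ'.G) :
    Γ.SwitchingEquivalent Γ' ↔
      ∀ (u : V) (w : Γ.G.Walk u u), w.IsCycle →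
        (Γ.walkSign w = 1 ↔ Γ'.walkSign w = 1) :=
  switching_equivalent_iff_same_positive_cycles_general Γ Γ' hG
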